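/- arXiv:math/0509129 — 2 statements merged into one kernel-verified Lean document; each statement's English description precedes it below -/
import Mathlib

section
/- Let w, w′ ∈ W^J and v ∈ W_J with w′v ⋖ w in Bruhat order, and let λ = w⁻¹w′v be the label of this covering. Then for every descending maximal chain in the Bruhat order from w to w′ that passes through w′v, all labels occurring after the initial label λ are strictly greater than λ in the reflection order ⪯. -/
namespace TNNFlag

open Classical

variable {B : Type*} {W : Type*} [Group W] {M : CoxeterMatrix B}

/-- Bruhat order on a Coxeter group, via the subword property: `u ≤ w` iff some reduced word
for `w` contains a sublist that is a reduced word for `u`. -/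
def bruhatLE (cs : CoxeterSystem M W) (u w : W) : Prop :=
  ∃ ω : List B, cs.IsReduced ω ∧ cs.wordProd ω = w ∧
    ∃ ω' : List B, ω'.Sublist ω ∧ cs.IsReduced ω' ∧ cs.wordProd ω' = u

/-- Strict Bruhat order. -/
def bruhatLT (cs : CoxeterSystem M W) (u w : W) : Prop :=
  bruhatLE cs u w ∧ u ≠ w

/-- Bruhat covering: `u ⋖ w`, i.e. `u < w` and `ℓ(w) = ℓ(u) + 1`. -/
def bruhatCov (cs : CoxeterSystem M W) (u w : W) : Prop :=
  bruhatLT cs u w ∧ cs.length w = cs.length u + 1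

/-- The standard parabolic subgroup `W_J` generated by the simple reflections `s_j`, `j ∈ J`. -/
def parabolic (cs : CoxeterSystem M W) (J : Set B) : Subgroup W :=
  Subgroup.closure {w | ∃ j ∈ J, w = cs.simple j}

/-- `W^J`: the set of minimal-length representatives of the cosets `W/W_J`. -/
def minReps (cs : CoxeterSystem M W) (J : Set B) : Set W :=
  {w | ∀ v ∈ parabolic cs J, cs.length w ≤ cs.length (w * v)}

/-- `u₀` is the longest element of the (finite) parabolic subgroup `W_J`. -/
def IsLongest (cs : CoxeterSystem M W) (J : Set B) (u₀ : W) : Prop :=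
  u₀ ∈ parabolic cs J ∧ ∀ v ∈ parabolic cs J, cs.length v ≤ cs.length u₀

/-- `W^J_max = {w·u₀ : w ∈ W^J}`: maximal-length coset representatives of `W/W_J`. -/
def maxReps (cs : CoxeterSystem M W) (J : Set B) (u₀ : W) : Set W :=
  {x | ∃ w ∈ minReps cs J, x = w * u₀}

/-- The index set `𝓘^J` of triples `(x, u, w) ∈ W^J_max × W_J × W^J` with `x ≤ wu`. -/
def IndexSet (cs : CoxeterSystem M W) (J : Set B) (u₀ : W) : Set (W × W × W) :=
  {t | t.1 ∈ maxReps cs J u₀ ∧ t.2.1 ∈ parabolic cs J ∧ t.2.2 ∈ minReps cs J ∧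
    bruhatLE cs t.1 (t.2.2 * t.2.1)}

/-- The order relation between cells: `Q_{a,b,c} ≤ Q_{x,u,w}` iff the triples are equal or
there exist `b₁, b₂ ∈ W_J` with `b = b₁b₂`, `ℓ(b) = ℓ(b₁) + ℓ(b₂)` and
`xu⁻¹ ≤ ab₂⁻¹ ≤ cb₁ ≤ w` in Bruhat order. Here `t = (a,b,c)` and `t' = (x,u,w)`. -/
def cellLE (cs : CoxeterSystem M W) (J : Set B) (t t' : W × W × W) : Prop :=
  t = t' ∨
    ∃ b₁ b₂ : W, b₁ ∈ parabolic cs J ∧ b₂ ∈ parabolic cs J ∧ t.2.1 = b₁ * b₂ ∧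
      cs.length t.2.1 = cs.length b₁ + cs.length b₂ ∧
      bruhatLE cs (t'.1 * t'.2.1⁻¹) (t.1 * b₂⁻¹) ∧
      bruhatLE cs (t.1 * b₂⁻¹) (t.2.2 * b₁) ∧
      bruhatLE cs (t.2.2 * b₁) t'.2.2

/-- The order of `𝓠^J`, on `Option (W × W × W)`, where `none` is the least element `0̂` and
`some (x,u,w)` is the cell `Q_{x,u,w}`. -/
def QLE (cs : CoxeterSystem M W) (J : Set B) :
    Option (W × W × W) → Option (W × W × W) → Prop
  | none, _ => True
  | some _, none => False
  | some t, some t' => cellLE cs J t t'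

/-- Membership in `𝓠^J`: `0̂` together with the cells indexed by `𝓘^J`. -/
def Qmem (cs : CoxeterSystem M W) (J : Set B) (u₀ : W) : Option (W × W × W) → Prop
  | none => True
  | some t => t ∈ IndexSet cs J u₀

/-- Strict order of `𝓠^J`. -/
def QLT (cs : CoxeterSystem M W) (J : Set B) (p q : Option (W × W × W)) : Prop :=
  QLE cs J p q ∧ p ≠ q

/-- Covering relation of `𝓠^J`. -/
def QCov (cs : CoxeterSystem M W) (J : Set B) (u₀ : W) (p q : Option (W × W × W)) : Prop :=
  Qmem cs J u₀ p ∧ Qmem cs J u₀ q ∧ QLT cs J p q ∧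
    ∀ z, Qmem cs J u₀ z → QLT cs J p z → QLT cs J z q → False

/-- The rank function of `𝓠^J`: `ρ(0̂) = 0` and `ρ(Q_{x,u,w}) = ℓ(wu) - ℓ(x) + 1`. -/
noncomputable def Qrank (cs : CoxeterSystem M W) : Option (W × W × W) → ℕ
  | none => 0
  | some t => cs.length (t.2.2 * t.2.1) - cs.length t.1 + 1

end TNNFlag
namespace TNNFlag

variable {B : Type*} {W : Type*} [Group W] {M : CoxeterMatrix B}

/-- The alternating product `r s r s ⋯ r` with `2k+1` letters, i.e. `(rs)^k r`. -/
def altProd (r s : W) (k : ℕ) : W := (r * s) ^ k * r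

/-- `t` occurs in the sequence `r, rsr, rsrsr, …`. -/
def onAltSeq (r s t : W) : Prop := ∃ k, altProd r s k = t

/-- The position of `t` in the sequence `r, rsr, rsrsr, …` (first occurrence). -/
noncomputable def altIdx (r s t : W) : ℕ := sInf {k | altProd r s k = t}

/-- `t` comes strictly before `t'` in the list of reflections
`r, rsr, rsrsr, …, srsrs, srs, s` of the dihedral subgroup generated by `r` and `s`. -/
def listBefore (r s t t' : W) : Prop :=
  (onAltSeq r s t ∧ onAltSeq r s t' ∧ altIdx r s t < altIdx r s t') ∨
  (onAltSeq r s t ∧ onAltSeq s r t' ∧ ¬ onAltSeq r s t') ∨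
  (onAltSeq s r t ∧ onAltSeq s r t' ∧ ¬ onAltSeq r s t ∧ ¬ onAltSeq r s t' ∧
    altIdx s r t' < altIdx s r t)

/-- `t` is a canonical generator of the reflection subgroup `W'` (Dyer):
`t` is a reflection lying in `W'` such that the only reflection `r ∈ W'` with
`ℓ(rt) < ℓ(t)` is `t` itself. -/
def IsCanonicalGen (cs : CoxeterSystem M W) (W' : Subgroup W) (t : W) : Prop :=
  cs.IsReflection t ∧ t ∈ W' ∧
    ∀ r : W, cs.IsReflection r → r ∈ W' → cs.length (r * t) < cs.length t → r = t

/-- A reflection order: a total order on the set `T` of reflections such that for every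
dihedral reflection subgroup (subgroup generated by two reflections), with canonical
generators `r`, `s`, the list of reflections `r, rsr, rsrsr, …, srsrs, srs, s` is either
increasing or decreasing. -/
structure IsReflectionOrder (cs : CoxeterSystem M W) (rle : W → W → Prop) : Prop where
  refl : ∀ t, cs.IsReflection t → rle t t
  antisymm : ∀ t t', rle t t' → rle t' t → t = t'
  trans : ∀ t t' t'', rle t t' → rle t' t'' → rle t t''
  total : ∀ t t', cs.IsReflection t → cs.IsReflection t' → rle t t' ∨ rle t' t
  dihedral : ∀ r s : W, cs.IsReflection r → cs.IsReflection s → r ≠ s →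
    IsCanonicalGen cs (Subgroup.closure {r, s}) r →
    IsCanonicalGen cs (Subgroup.closure {r, s}) s →
    (∀ t t' : W, listBefore r s t t' → rle t t' ∧ t ≠ t') ∨
    (∀ t t' : W, listBefore r s t t' → rle t' t ∧ t ≠ t')

/-- The reflections lying in `W_J` come last in the order `rle`. -/
def WJLast (cs : CoxeterSystem M W) (J : Set B) (rle : W → W → Prop) : Prop :=
  ∀ t t' : W, cs.IsReflection t → cs.IsReflection t' →
    t ∉ parabolic cs J → t' ∈ parabolic cs J → rle t t' ∧ t ≠ t'

/-- A descending saturated chain in Bruhat order from `w` to `w'`, recorded as the list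
of its elements, starting at `w` and ending at `w'`, with consecutive entries Bruhat coverings. -/
def bruhatChain (cs : CoxeterSystem M W) (w w' : W) (c : List W) : Prop :=
  c.Chain' (fun a b => bruhatCov cs b a) ∧ c.head? = some w ∧ c.getLast? = some w'

/-- The label sequence of a descending chain `x₀ ⋗ x₁ ⋗ ⋯ ⋗ x_k`,
namely `(x₀⁻¹x₁, x₁⁻¹x₂, …, x_{k−1}⁻¹x_k)`. -/
def chainLabels (c : List W) : List W := List.zipWith (fun a b => a⁻¹ * b) c c.tail

end TNNFlag
namespace TNNFlag

open CoxeterSystem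
open scoped Classical

variable {B : Type*} {W : Type*} [Group W] {M : CoxeterMatrix B}

/-! ### Auxiliary development: Tits' sign representation, strong exchange, and Bruhat theory -/

section SignRep

variable (cs : CoxeterSystem M W)

private theorem conj_eq_iff (a b c t : W) :
    a * t * b = c ↔ t = a⁻¹ * c * b⁻¹ := by
  constructor
  · intro e; rw [← e]; group
  · intro e; rw [e]; group

/-- The involution of `W × ℤˣ` attached to an involution `a` of `W`. -/
noncomputable def refPerm (a : W) (ha : a * a = 1) : Equiv.Perm (W × ℤˣ) :=
  Function.Involutive.toPerm
    (fun p => (a * p.1 * a, if p.1 = a then -p.2 else p.2))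
    (by
      have hinv : a⁻¹ = a := inv_eq_of_mul_eq_one_right ha
      have hc : ∀ t : W, (a * t * a = a) ↔ (t = a) := fun t => by
        rw [conj_eq_iff, hinv, ha, one_mul]
      have hcancel : ∀ t : W, a * (a * t * a) * a = t := fun t => by
        calc a * (a * t * a) * a = (a * a) * t * (a * a) := by group
          _ = t := by rw [ha, one_mul, mul_one]
      rintro ⟨t, ε⟩
      show (a * (a * t * a) * a,
          if a * t * a = a then -(if t = a then -ε else ε)
          else (if t = a then -ε else ε)) = (t, ε)
      by_cases h : t = a
      · rw [if_pos h, if_pos ((hc t).mpr h), hcancel, neg_neg]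
      · rw [if_neg h, if_neg (fun hx => h ((hc t).mp hx)), hcancel])

theorem refPerm_apply (a : W) (ha : a * a = 1) (t : W) (ε : ℤˣ) :
    refPerm a ha (t, ε) = (a * t * a, if t = a then -ε else ε) := rfl

private theorem pal_aux {G : Type*} [Group G] (a b : G) (q : ℕ) :
    (a*b) * ((a*b)^q * a) * (b*a) = (a*b)^(q+2) * a := by
  have h : (a*b) * (a*b)^q = (a*b)^q * (a*b) := by rw [← pow_succ', pow_succ]
  calc a*b * ((a*b)^q * a) * (b*a) = ((a*b) * (a*b)^q) * (a * b * a) := by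
        simp [mul_assoc]
    _ = ((a*b)^q * (a*b)) * (a*b*a) := by rw [h]
    _ = (a*b)^(q+2) * a := by rw [pow_add, pow_two]; simp [mul_assoc]

private theorem flip_aux (c : Prop) [Decidable c] (x : ℤˣ) :
    (if c then -x else x) = x * (if c then -1 else 1) := by
  split_ifs <;> simp

private theorem conj_pow_aux {G : Type*} [Group G] (g t : G) (m : ℕ) :
    g^m * (g * t * g⁻¹) * (g^m)⁻¹ = g^(m+1) * t * (g^(m+1))⁻¹ := by
  rw [pow_succ]
  group

theorem refPerm_mul_pow_apply (a b : W) (ha : a * a = 1) (hb : b * b = 1)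
    (m : ℕ) (t : W) (ε : ℤˣ) :
    ((refPerm a ha * refPerm b hb) ^ m) (t, ε) =
      ((a * b) ^ m * t * ((a * b) ^ m)⁻¹,
       ε * ∏ q ∈ Finset.range (2 * m),
         (if t = (b * a) ^ q * b then (-1 : ℤˣ) else 1)) := by
  have hainv : a⁻¹ = a := inv_eq_of_mul_eq_one_right ha
  have hbinv : b⁻¹ = b := inv_eq_of_mul_eq_one_right hb
  have habinv : (a * b)⁻¹ = b * a := by rw [mul_inv_rev, hainv, hbinv]
  induction m generalizing t ε with
  | zero => simp
  | succ m ih =>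
    have key : ((refPerm a ha * refPerm b hb) ^ (m + 1)) (t, ε)
        = ((refPerm a ha * refPerm b hb) ^ m) ((refPerm a ha) ((refPerm b hb) (t, ε))) := by
      rw [pow_succ]
      rfl
    rw [key, refPerm_apply, refPerm_apply, ih]
    have hconj : a * (b * t * b) * a = (a * b) * t * (a * b)⁻¹ := by
      rw [habinv]; group
    refine Prod.ext ?_ ?_
    · show (a*b)^m * (a * (b * t * b) * a) * ((a*b)^m)⁻¹ = _
      rw [hconj, conj_pow_aux]
    · show (if b * t * b = a then -(if t = b then -ε else ε) else (if t = b then -ε else ε))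
          * ∏ q ∈ Finset.range (2 * m),
              (if a * (b * t * b) * a = (b * a) ^ q * b then (-1 : ℤˣ) else 1) = _
      have hc0 : (t = b) ↔ (t = (b * a) ^ 0 * b) := by rw [pow_zero, one_mul]
      have hc1 : (b * t * b = a) ↔ (t = (b * a) ^ 1 * b) := by
        rw [conj_eq_iff, hbinv, pow_one, mul_assoc]
      have hc2 : ∀ q : ℕ, (a * (b * t * b) * a = (b * a) ^ q * b)
          ↔ (t = (b * a) ^ (q + 2) * b) := by
        intro q
        have habinv2 : (b * a)⁻¹ = a * b := by rw [mul_inv_rev, hainv, hbinv]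
        rw [hconj, conj_eq_iff, habinv, habinv2, pal_aux b a q]
      have hprod : ∏ q ∈ Finset.range (2 * m),
            (if a * (b * t * b) * a = (b * a) ^ q * b then (-1 : ℤˣ) else 1)
          = ∏ q ∈ Finset.range (2 * m),
            (if t = (b * a) ^ (q + 2) * b then (-1 : ℤˣ) else 1) :=
        Finset.prod_congr rfl (fun q _ => by rw [if_congr (hc2 q) rfl rfl])
      rw [hprod]
      have hexpand : ∏ q ∈ Finset.range (2 * (m + 1)),
            (if t = (b * a) ^ q * b then (-1 : ℤˣ) else 1)
          = ((∏ q ∈ Finset.range (2 * m),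
              (if t = (b * a) ^ (q + 2) * b then (-1 : ℤˣ) else 1))
            * (if t = (b * a) ^ 1 * b then (-1 : ℤˣ) else 1))
            * (if t = (b * a) ^ 0 * b then (-1 : ℤˣ) else 1) := by
        rw [show 2 * (m + 1) = (2 * m + 1) + 1 by ring, Finset.prod_range_succ',
          Finset.prod_range_succ']
      rw [hexpand, flip_aux, flip_aux, if_congr hc0 rfl rfl, if_congr hc1 rfl rfl]
      generalize (if t = (b * a) ^ 0 * b then (-1 : ℤˣ) else 1) = d0
      generalize (if t = (b * a) ^ 1 * b then (-1 : ℤˣ) else 1) = d1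
      generalize (∏ q ∈ Finset.range (2 * m),
        (if t = (b * a) ^ (q + 2) * b then (-1 : ℤˣ) else 1)) = P
      simp only [mul_comm, mul_left_comm, mul_assoc]

/-- Tits' sign representation `W →* Perm (W × ℤˣ)`. -/
noncomputable def etaHom : W →* Equiv.Perm (W × ℤˣ) :=
  cs.lift ⟨fun i => refPerm (cs.simple i) (cs.simple_mul_simple_self i), by
    intro i i'
    apply Equiv.ext
    rintro ⟨t, ε⟩
    rw [refPerm_mul_pow_apply]
    have h1 : (cs.simple i * cs.simple i') ^ M i i' = 1 := cs.simple_mul_simple_pow i i'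
    have h2 : (cs.simple i' * cs.simple i) ^ M i i' = 1 := cs.simple_mul_simple_pow' i i'
    have hper : ∀ q : ℕ, (cs.simple i' * cs.simple i) ^ (M i i' + q)
        = (cs.simple i' * cs.simple i) ^ q := by
      intro q; rw [pow_add, h2, one_mul]
    have hsign : ∏ q ∈ Finset.range (2 * M i i'),
        (if t = (cs.simple i' * cs.simple i) ^ q * cs.simple i' then (-1 : ℤˣ) else 1) = 1 := by
      rw [two_mul, Finset.prod_range_add]
      have : ∀ q ∈ Finset.range (M i i'),
          (if t = (cs.simple i' * cs.simple i) ^ (M i i' + q) * cs.simple i'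
            then (-1 : ℤˣ) else 1)
          = (if t = (cs.simple i' * cs.simple i) ^ q * cs.simple i' then (-1 : ℤˣ) else 1) :=
        fun q _ => by rw [hper q]
      rw [Finset.prod_congr rfl this]
      exact Int.units_mul_self _
    rw [h1, hsign]
    simp⟩

theorem etaHom_simple (i : B) :
    etaHom cs (cs.simple i) = refPerm (cs.simple i) (cs.simple_mul_simple_self i) :=
  cs.lift_apply_simple _ i

/-- The sign of the pair `(w, t)`. -/
noncomputable def eta (w t : W) : ℤˣ := ((etaHom cs w) (t, 1)).2

/-- The product of `-1` over occurrences of `t` in `l`. -/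
noncomputable def signSeq (l : List W) (t : W) : ℤˣ :=
  (l.map (fun r => if r = t then (-1 : ℤˣ) else 1)).prod

theorem signSeq_nil (t : W) : signSeq ([] : List W) t = 1 := rfl

theorem signSeq_cons (r : W) (l : List W) (t : W) :
    signSeq (r :: l) t = (if r = t then (-1 : ℤˣ) else 1) * signSeq l t := by
  simp [signSeq]

theorem signSeq_eq_one_of_not_mem {l : List W} {t : W} (h : t ∉ l) : signSeq l t = 1 := by
  induction l with
  | nil => rfl
  | cons r l ih =>
    rw [signSeq_cons, if_neg (fun e => h (by rw [← e]; exact List.mem_cons_self)),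
      ih (fun hm => h (List.mem_cons_of_mem r hm)), one_mul]

private theorem rightInvSeq_cons' (i : B) (ω : List B) :
    cs.rightInvSeq (i :: ω) =
      ((cs.wordProd ω)⁻¹ * cs.simple i * cs.wordProd ω) :: cs.rightInvSeq ω := rfl

theorem etaHom_wordProd (ω : List B) (t : W) (ε : ℤˣ) :
    (etaHom cs (cs.wordProd ω)) (t, ε) =
      (cs.wordProd ω * t * (cs.wordProd ω)⁻¹, ε * signSeq (cs.rightInvSeq ω) t) := by
  induction ω generalizing t ε with
  | nil => simp [signSeq]
  | cons i ω ih =>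
    rw [cs.wordProd_cons, map_mul, Equiv.Perm.mul_apply, ih, etaHom_simple, refPerm_apply,
      rightInvSeq_cons', signSeq_cons]
    refine Prod.ext ?_ ?_
    · show cs.simple i * (cs.wordProd ω * t * (cs.wordProd ω)⁻¹) * cs.simple i = _
      have : (cs.simple i * cs.wordProd ω)⁻¹ = (cs.wordProd ω)⁻¹ * cs.simple i := by
        rw [mul_inv_rev, cs.inv_simple]
      rw [this]; group
    · show (if cs.wordProd ω * t * (cs.wordProd ω)⁻¹ = cs.simple i
          then -(ε * signSeq (cs.rightInvSeq ω) t) else ε * signSeq (cs.rightInvSeq ω) t) = _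
      have hiff : (cs.wordProd ω * t * (cs.wordProd ω)⁻¹ = cs.simple i)
          ↔ ((cs.wordProd ω)⁻¹ * cs.simple i * cs.wordProd ω = t) := by
        rw [conj_eq_iff, inv_inv]
        exact eq_comm
      rw [flip_aux, if_congr hiff rfl rfl]
      generalize (if (cs.wordProd ω)⁻¹ * cs.simple i * cs.wordProd ω = t
        then (-1 : ℤˣ) else 1) = d
      generalize signSeq (cs.rightInvSeq ω) t = S
      simp only [mul_comm, mul_left_comm, mul_assoc]

theorem eta_wordProd (ω : List B) (t : W) :
    eta cs (cs.wordProd ω) t = signSeq (cs.rightInvSeq ω) t := by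
  rw [eta, etaHom_wordProd]; simp

theorem etaHom_apply (w t : W) (ε : ℤˣ) :
    (etaHom cs w) (t, ε) = (w * t * w⁻¹, ε * eta cs w t) := by
  obtain ⟨ω, -, rfl⟩ := cs.exists_reduced_word' w
  rw [etaHom_wordProd, eta_wordProd]

theorem eta_mul (x y t : W) :
    eta cs (x * y) t = eta cs y t * eta cs x (y * t * y⁻¹) := by
  have h : (etaHom cs (x * y)) (t, 1) = (etaHom cs x) ((etaHom cs y) (t, 1)) := by
    rw [map_mul, Equiv.Perm.mul_apply]
  rw [etaHom_apply, etaHom_apply, etaHom_apply] at h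
  have h2 := congrArg Prod.snd h
  simp only [one_mul] at h2
  exact h2

theorem eta_one (t : W) : eta cs 1 t = 1 := by
  have := eta_wordProd cs ([] : List B) t
  simpa [signSeq] using this

theorem eta_simple (i : B) (t : W) :
    eta cs (cs.simple i) t = if cs.simple i = t then -1 else 1 := by
  have := eta_wordProd cs [i] t
  simpa [signSeq_cons, signSeq_nil] using this

theorem eta_inv (p t : W) : eta cs p⁻¹ t = eta cs p (p⁻¹ * t * p) := by
  have h := eta_mul cs p p⁻¹ t
  rw [mul_inv_cancel, eta_one] at h
  have h2 : p⁻¹ * t * p⁻¹⁻¹ = p⁻¹ * t * p := by rw [inv_inv]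
  rw [h2] at h
  have hu := Int.units_mul_self (eta cs p⁻¹ t)
  rcases Int.units_eq_one_or (eta cs p (p⁻¹ * t * p)) with h3 | h3 <;>
    rcases Int.units_eq_one_or (eta cs p⁻¹ t) with h4 | h4 <;>
      rw [h3, h4] at h ⊢ <;> simp_all

theorem eta_self {t : W} (ht : cs.IsReflection t) : eta cs t t = -1 := by
  obtain ⟨p, i, rfl⟩ := ht
  set t := p * cs.simple i * p⁻¹ with hts
  have h1 : t = (p * cs.simple i) * p⁻¹ := by rw [hts, mul_assoc]
  have h2 : eta cs t t = eta cs p⁻¹ t * eta cs (p * cs.simple i) (p⁻¹ * t * p⁻¹⁻¹) := by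
    rw [h1, ← eta_mul]
  have h3 : p⁻¹ * t * p⁻¹⁻¹ = cs.simple i := by rw [hts]; group
  have h4 : eta cs (p * cs.simple i) (cs.simple i)
      = eta cs (cs.simple i) (cs.simple i) * eta cs p
          (cs.simple i * cs.simple i * (cs.simple i)⁻¹) := eta_mul cs p (cs.simple i) _
  have h5 : cs.simple i * cs.simple i * (cs.simple i)⁻¹ = cs.simple i := by
    rw [cs.simple_mul_simple_self, one_mul, cs.inv_simple]
  have h6 : eta cs (cs.simple i) (cs.simple i) = -1 := by
    rw [eta_simple, if_pos rfl]
  have h7 : eta cs p⁻¹ t = eta cs p (cs.simple i) := by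
    rw [eta_inv]
    congr 1
    rw [hts]
    group
  rw [h3] at h2
  rw [h5, h6] at h4
  rw [h7] at h2
  rw [h2, h4]
  rcases Int.units_eq_one_or (eta cs p (cs.simple i)) with h8 | h8 <;> rw [h8] <;> decide

end SignRep

section StrongExchange

variable (cs : CoxeterSystem M W)

theorem isRightInversion_of_eta_neg {w t : W} (h : eta cs w t = -1) :
    cs.IsRightInversion w t := by
  obtain ⟨ω, hred, rfl⟩ := cs.exists_reduced_word' w
  rw [eta_wordProd] at h
  have hmem : t ∈ cs.rightInvSeq ω := by
    by_contra hmem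
    rw [signSeq_eq_one_of_not_mem hmem] at h
    exact absurd h (by decide)
  exact cs.isRightInversion_of_mem_rightInvSeq hred hmem

theorem eta_neg_of_lt {w t : W} (ht : cs.IsReflection t)
    (h : cs.length (w * t) < cs.length w) : eta cs w t = -1 := by
  have hwt : w * t * t = w := by rw [mul_assoc, ht.mul_self, mul_one]
  have h2 : eta cs (w * t) t ≠ -1 := by
    intro hc
    have := (isRightInversion_of_eta_neg cs hc).2
    rw [hwt] at this
    omega
  have h3 : eta cs (w * t) t = 1 := by
    rcases Int.units_eq_one_or (eta cs (w * t) t) with h3 | h3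
    · exact h3
    · exact absurd h3 h2
  have h4 : eta cs ((w * t) * t) t = eta cs t t * eta cs (w * t) (t * t * t⁻¹) :=
    eta_mul cs (w * t) t t
  have h5 : t * t * t⁻¹ = t := by rw [ht.mul_self, one_mul, ht.inv]
  rw [hwt, h5, h3, eta_self cs ht, mul_one] at h4
  exact h4

/-- The strong exchange property. -/
theorem strong_exchange {w t : W} (ht : cs.IsReflection t)
    (h : cs.length (w * t) < cs.length w) (ω : List B) (hω : cs.wordProd ω = w) :
    ∃ j < ω.length, cs.wordProd (ω.eraseIdx j) = w * t := by
  have hsign : signSeq (cs.rightInvSeq ω) t = -1 := by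
    rw [← eta_wordProd, hω]; exact eta_neg_of_lt cs ht h
  have hmem : t ∈ cs.rightInvSeq ω := by
    by_contra hmem
    rw [signSeq_eq_one_of_not_mem hmem] at hsign
    exact absurd hsign (by decide)
  obtain ⟨j, hj, hjt⟩ := List.mem_iff_getElem.mp hmem
  refine ⟨j, by simpa using hj, ?_⟩
  have hgd := cs.wordProd_mul_getD_rightInvSeq ω j
  rw [List.getD_eq_getElem _ _ hj, hjt, hω] at hgd
  exact hgd.symm

/-- The deletion property: every word has a reduced sublist with the same product. -/
theorem exists_reduced_sublist :
    ∀ (n : ℕ) (ω : List B), ω.length ≤ n →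
      ∃ σ, σ.Sublist ω ∧ cs.IsReduced σ ∧ cs.wordProd σ = cs.wordProd ω := by
  intro n
  induction n with
  | zero =>
    intro ω hlen
    have : ω = [] := List.length_eq_zero_iff.mp (Nat.le_zero.mp hlen)
    subst this
    exact ⟨[], List.Sublist.refl _, by simp [CoxeterSystem.IsReduced], rfl⟩
  | succ n ih =>
    intro ω hlen
    by_cases hred : cs.IsReduced ω
    · exact ⟨ω, List.Sublist.refl _, hred, rfl⟩
    · have hlt : cs.length (cs.wordProd ω) ≠ ω.length := hred
      have hstrict : ∃ k, ∃ hk : k < ω.length,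
          cs.length (cs.wordProd (ω.take (k+1))) < cs.length (cs.wordProd (ω.take k)) := by
        by_contra hno
        push_neg at hno
        have mono : ∀ k, k ≤ ω.length → cs.length (cs.wordProd (ω.take k)) = k := by
          intro k
          induction k with
          | zero => intro _; simp
          | succ k ihk =>
            intro hk1
            have hk : k < ω.length := by omega
            have htake : ω.take (k+1) = ω.take k ++ [ω[k]] := by
              rw [← List.take_concat_get hk, List.concat_eq_append]
            have hge := hno k hk
            have hne := cs.length_mul_simple_ne (cs.wordProd (ω.take k)) ω[k]
            have hle := cs.length_mul_le (cs.wordProd (ω.take k)) (cs.simple ω[k])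
            have hls := cs.length_simple ω[k]
            rw [htake, cs.wordProd_append, cs.wordProd_singleton] at hge ⊢
            rw [ihk (by omega)] at hge hne hle
            omega
        have := mono ω.length le_rfl
        rw [List.take_length] at this
        exact hlt this
      obtain ⟨k, hk, hdrop⟩ := hstrict
      have htake : ω.take (k+1) = ω.take k ++ [ω[k]] := by
        rw [← List.take_concat_get hk, List.concat_eq_append]
      rw [htake, cs.wordProd_append, cs.wordProd_singleton] at hdrop
      obtain ⟨j, hj, hjprod⟩ := strong_exchange cs (cs.isReflection_simple ω[k])
        hdrop (ω.take k) rfl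
      set ω₂ := (ω.take k).eraseIdx j ++ ω.drop (k+1) with hω₂
      have hsub : ω₂.Sublist ω := by
        have h1 : ((ω.take k).eraseIdx j).Sublist (ω.take k) := List.eraseIdx_sublist _ j
        have h2 : (ω.drop (k+1)).Sublist (ω.drop k) := by
          have : ω.drop (k+1) = (ω.drop k).drop 1 := by rw [List.drop_drop, Nat.add_comm]
          rw [this]
          exact List.drop_sublist 1 _
        have h3 : ω₂.Sublist (ω.take k ++ ω.drop k) := List.Sublist.append h1 h2
        rwa [List.take_append_drop] at h3
      have hprod : cs.wordProd ω₂ = cs.wordProd ω := by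
        rw [hω₂, cs.wordProd_append, hjprod]
        conv_rhs => rw [← List.take_append_drop (k+1) ω]
        rw [cs.wordProd_append, htake, cs.wordProd_append, cs.wordProd_singleton]
      have hlen2 : ω₂.length ≤ n := by
        have h2 := List.length_eraseIdx_add_one hj
        have h3 : (ω.drop (k+1)).length = ω.length - (k+1) := List.length_drop
        have h4 : (ω.take k).length = k := by rw [List.length_take]; omega
        rw [hω₂, List.length_append]
        omega
      obtain ⟨σ, hs1, hs2, hs3⟩ := ih ω₂ hlen2
      exact ⟨σ, hs1.trans hsub, hs2, by rw [hs3, hprod]⟩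

theorem exists_reduced_sublist' (ω : List B) :
    ∃ σ, σ.Sublist ω ∧ cs.IsReduced σ ∧ cs.wordProd σ = cs.wordProd ω :=
  exists_reduced_sublist cs ω.length ω le_rfl

end StrongExchange

section BruhatTheory

variable (cs : CoxeterSystem M W)

theorem isReduced_append {l₁ l₂ : List B} (h : cs.IsReduced (l₁ ++ l₂)) :
    cs.IsReduced l₁ ∧ cs.IsReduced l₂ := by
  constructor
  · have := h.take l₁.length
    rwa [List.take_left] at this
  · have := h.drop l₁.length
    rwa [List.drop_left] at this

private theorem sublist_eraseIdx_of_length {α : Type*} {l' l : List α} (h : l'.Sublist l) :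
    l'.length + 1 = l.length → ∃ j, j < l.length ∧ l' = l.eraseIdx j := by
  induction h with
  | slnil => intro hlen; simp at hlen
  | @cons l₁ l₂ a h ih =>
    intro hlen
    have : l₁ = l₂ := h.eq_of_length (by simpa using hlen)
    exact ⟨0, by simp, by simp [this]⟩
  | @cons_cons l₁ l₂ a h ih =>
    intro hlen
    obtain ⟨j, hj, hje⟩ := ih (by simpa using hlen)
    exact ⟨j + 1, by simpa using hj, by simp [List.eraseIdx_cons_succ, hje]⟩

/-- Structure of a Bruhat covering: the quotient is a reflection. -/
theorem cov_struct {u x : W} (h : bruhatCov cs u x) :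
    cs.IsReflection (x⁻¹ * u) ∧ cs.length x = cs.length u + 1 ∧
      cs.length (x * (x⁻¹ * u)) < cs.length x := by
  obtain ⟨⟨⟨ω, hred, hπ, ω', hsub, hred', hπ'⟩, hne⟩, hlen⟩ := h
  have hl : ω'.length + 1 = ω.length := by
    have e1 : cs.length x = ω.length := by rw [← hπ]; exact hred
    have e2 : cs.length u = ω'.length := by rw [← hπ']; exact hred'
    omega
  obtain ⟨j, hj, rfl⟩ := sublist_eraseIdx_of_length hsub hl
  have hgd := cs.wordProd_mul_getD_rightInvSeq ω j
  have hmem : (cs.rightInvSeq ω).getD j 1 ∈ cs.rightInvSeq ω := by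
    rw [List.getD_eq_getElem _ _ (by simpa using hj)]
    exact List.getElem_mem _
  have hx : x⁻¹ * u = (cs.rightInvSeq ω).getD j 1 := by
    rw [← hπ, ← hπ', ← hgd]
    group
  refine ⟨hx ▸ cs.isReflection_of_mem_rightInvSeq ω hmem, hlen, ?_⟩
  rw [mul_inv_cancel_left]
  omega

/-- A single step of the Bruhat chain order. -/
def bstep (a b : W) : Prop :=
  ∃ t, cs.IsReflection t ∧ b = a * t ∧ cs.length a < cs.length b

/-- The Bruhat chain order. -/
def chainLE : W → W → Prop := Relation.ReflTransGen (bstep cs)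

theorem bstep_of_cov {u x : W} (h : bruhatCov cs u x) : bstep cs u x := by
  obtain ⟨hrefl, hlen, -⟩ := cov_struct cs h
  have hrefl' : cs.IsReflection (u⁻¹ * x) := by
    have := hrefl.isReflection_inv
    rwa [mul_inv_rev, inv_inv] at this
  exact ⟨u⁻¹ * x, hrefl', by rw [mul_inv_cancel_left], by omega⟩

/-- The (strong form of the) subword property for the chain order. -/
theorem chainLE_subword {u w : W} (h : chainLE cs u w) (ω : List B)
    (hred : cs.IsReduced ω) (hprod : cs.wordProd ω = w) :
    ∃ σ, σ.Sublist ω ∧ cs.IsReduced σ ∧ cs.wordProd σ = u := by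
  induction h using Relation.ReflTransGen.head_induction_on with
  | refl => exact ⟨ω, List.Sublist.refl _, hred, hprod⟩
  | head hstep _ ih =>
    obtain ⟨σy, hsub, hredy, hprody⟩ := ih
    obtain ⟨t, htr, hyx, hlt⟩ := hstep
    rename_i a c _
    have ha : a = c * t := by rw [hyx, mul_assoc, htr.mul_self, mul_one]
    have hlt2 : cs.length (cs.wordProd σy * t) < cs.length (cs.wordProd σy) := by
      rw [hprody, ← ha]
      exact hlt
    obtain ⟨j, hj, hjp⟩ := strong_exchange cs htr hlt2 σy rfl
    obtain ⟨σ, hσs, hσr, hσp⟩ := exists_reduced_sublist' cs (σy.eraseIdx j)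
    refine ⟨σ, hσs.trans ((List.eraseIdx_sublist _ _).trans hsub), hσr, ?_⟩
    rw [hσp, hjp, hprody, ← ha]

/-- Elements of a descending covering chain are `chainLE`-above the last element. -/
theorem chain_chainLE : ∀ (l : List W), l.Chain' (fun a b => bruhatCov cs b a) →
    ∀ {w' : W}, l.getLast? = some w' → ∀ {x : W}, l.head? = some x → chainLE cs w' x := by
  intro l
  induction l with
  | nil => intro _ w' h; simp at h
  | cons x l ih =>
    intro hch w' hlast x' hhead
    have hx : x = x' := by simpa using hhead
    subst hx
    cases l with
    | nil =>
      have hx2 : x = w' := by simpa using hlast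
      subst hx2
      exact Relation.ReflTransGen.refl
    | cons y l₂ =>
      have hcov : bruhatCov cs y x := (List.isChain_cons_cons.mp hch).1
      have hch₂ := (List.isChain_cons_cons.mp hch).2
      have hlast₂ : (y :: l₂).getLast? = some w' := by
        rwa [List.getLast?_cons_cons] at hlast
      have hy : chainLE cs w' y := ih hch₂ hlast₂ (by simp)
      exact hy.tail (bstep_of_cov cs hcov)

/-- Lengths strictly decrease along a descending covering chain. -/
theorem chain_length_lt : ∀ (l : List W) (y : W),
    (y :: l).Chain' (fun a b => bruhatCov cs b a) →
    ∀ z ∈ l, cs.length z < cs.length y := by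
  intro l
  induction l with
  | nil => intro y _ z hz; simp at hz
  | cons y₂ l₂ ih =>
    intro y hch z hz
    have hcov : bruhatCov cs y₂ y := (List.isChain_cons_cons.mp hch).1
    have hlen := (cov_struct cs hcov).2.1
    rcases List.mem_cons.mp hz with rfl | hz₂
    · omega
    · have := ih y₂ (List.isChain_cons_cons.mp hch).2 z hz₂
      omega

end BruhatTheory

section Parabolic

variable (cs : CoxeterSystem M W) (J : Set B)

theorem wordProd_mem_parabolic {α : List B} (hα : ∀ i ∈ α, i ∈ J) :
    cs.wordProd α ∈ parabolic cs J := by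
  induction α with
  | nil => rw [cs.wordProd_nil]; exact one_mem _
  | cons i α ih =>
    rw [cs.wordProd_cons]
    exact mul_mem (Subgroup.subset_closure ⟨i, hα i List.mem_cons_self, rfl⟩)
      (ih (fun j hj => hα j (List.mem_cons_of_mem i hj)))

theorem exists_reduced_J_word {a : W} (ha : a ∈ parabolic cs J) :
    ∃ α : List B, (∀ i ∈ α, i ∈ J) ∧ cs.IsReduced α ∧ cs.wordProd α = a := by
  have hword : ∃ β : List B, (∀ i ∈ β, i ∈ J) ∧ cs.wordProd β = a := by
    refine Subgroup.closure_induction ?_ ?_ ?_ ?_ ha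
    · rintro x ⟨j, hj, rfl⟩
      exact ⟨[j], by simpa using hj, by simp⟩
    · exact ⟨[], by simp, by simp⟩
    · rintro x y _ _ ⟨β₁, hβ₁, rfl⟩ ⟨β₂, hβ₂, rfl⟩
      exact ⟨β₁ ++ β₂, by
        intro i hi
        rcases List.mem_append.mp hi with h | h
        exacts [hβ₁ i h, hβ₂ i h], by rw [cs.wordProd_append]⟩
    · rintro x _ ⟨β, hβ, rfl⟩
      exact ⟨β.reverse, fun i hi => hβ i (List.mem_reverse.mp hi), by simp⟩
  obtain ⟨β, hβJ, hβprod⟩ := hword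
  obtain ⟨σ, hσsub, hσred, hσprod⟩ := exists_reduced_sublist' cs β
  exact ⟨σ, fun i hi => hβJ i (hσsub.subset hi), hσred, by rw [hσprod, hβprod]⟩

/-- Key lemma: appending a reduced `J`-word to a reduced word of a minimal coset
representative yields a reduced word. -/
theorem isReduced_minRep_append {w' : W} (hw' : w' ∈ minReps cs J)
    {ω' : List B} (hred' : cs.IsReduced ω') (hprod' : cs.wordProd ω' = w') :
    ∀ {α : List B}, (∀ i ∈ α, i ∈ J) → cs.IsReduced α → cs.IsReduced (ω' ++ α) := by
  intro α
  induction α using List.reverseRecOn with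
  | nil =>
    intro _ _
    rw [List.append_nil]
    exact hred'
  | append_singleton α₁ j ihα =>
    intro hαJ hαred
    have hα₁J : ∀ i ∈ α₁, i ∈ J := fun i hi => hαJ i (List.mem_append_left _ hi)
    have hjJ : j ∈ J := hαJ j (List.mem_append_right _ (List.mem_singleton_self j))
    have hα₁red : cs.IsReduced α₁ := (isReduced_append cs hαred).1
    have hx : cs.IsReduced (ω' ++ α₁) := ihα hα₁J hα₁red
    have hgoal : cs.length (cs.wordProd (ω' ++ α₁) * cs.simple j)
        = (ω' ++ α₁).length + 1 := by
      rcases cs.length_mul_simple (cs.wordProd (ω' ++ α₁)) j with hcase | hcase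
      · rw [hcase, hx]
      · exfalso
        have hlt : cs.length (cs.wordProd (ω' ++ α₁) * cs.simple j)
            < cs.length (cs.wordProd (ω' ++ α₁)) := by omega
        obtain ⟨m, hm, hmp⟩ := strong_exchange cs (cs.isReflection_simple j) hlt
          (ω' ++ α₁) rfl
        rcases lt_or_ge m ω'.length with hc | hc
        · rw [List.eraseIdx_append_of_lt_length hc] at hmp
          set r := cs.wordProd α₁ * cs.simple j * (cs.wordProd α₁)⁻¹ with hr
          have hrmem : r ∈ parabolic cs J :=
            mul_mem (mul_mem (wordProd_mem_parabolic cs J hα₁J)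
              (Subgroup.subset_closure ⟨j, hjJ, rfl⟩))
              (inv_mem (wordProd_mem_parabolic cs J hα₁J))
          have hw'r : w' * r = cs.wordProd (ω'.eraseIdx m) := by
            have hsplit2 : cs.wordProd (ω'.eraseIdx m) * cs.wordProd α₁
                = w' * cs.wordProd α₁ * cs.simple j := by
              rw [← cs.wordProd_append, hmp, cs.wordProd_append, hprod']
            have he : cs.wordProd (ω'.eraseIdx m)
                = w' * cs.wordProd α₁ * cs.simple j * (cs.wordProd α₁)⁻¹ := by
              rw [← hsplit2]; group
            rw [he, hr]
            group
          have h1 := hw' r hrmem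
          rw [hw'r] at h1
          have h2 := cs.length_wordProd_le (ω'.eraseIdx m)
          have h3 := List.length_eraseIdx_add_one hc
          have h4 : cs.length w' = ω'.length := by rw [← hprod']; exact hred'
          omega
        · rw [List.eraseIdx_append_of_length_le hc] at hmp
          have hmlt : m - ω'.length < α₁.length := by
            rw [List.length_append] at hm
            omega
          have hcancel : cs.wordProd α₁ * cs.simple j
              = cs.wordProd (α₁.eraseIdx (m - ω'.length)) := by
            have := hmp
            rw [cs.wordProd_append, cs.wordProd_append, hprod'] at this
            rw [mul_assoc] at this
            exact (mul_left_cancel this).symm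
          have h2 := cs.length_wordProd_le (α₁.eraseIdx (m - ω'.length))
          have h3 := List.length_eraseIdx_add_one hmlt
          have h4 : cs.length (cs.wordProd α₁ * cs.simple j) = α₁.length + 1 := by
            have := hαred
            unfold CoxeterSystem.IsReduced at this
            rw [cs.wordProd_append, cs.wordProd_singleton, List.length_append] at this
            simpa using this
          rw [hcancel] at h4
          omega
    have hsplit : cs.wordProd (ω' ++ (α₁ ++ [j])) = cs.wordProd (ω' ++ α₁) * cs.simple j := by
      rw [← List.append_assoc, cs.wordProd_append, cs.wordProd_singleton]
    show cs.length (cs.wordProd (ω' ++ (α₁ ++ [j]))) = (ω' ++ (α₁ ++ [j])).length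
    rw [hsplit, hgoal]
    simp only [List.length_append, List.length_singleton]
    omega

/-- The coset step lemma: a Bruhat covering descending from an element of `w'·W_J`,
whose lower end is `chainLE`-above `w'`, stays in the coset `w'·W_J`. -/
theorem coset_step {w' a x₂ : W} (hw' : w' ∈ minReps cs J) (ha : a ∈ parabolic cs J)
    (hcov : bruhatCov cs x₂ (w' * a)) (hch : chainLE cs w' x₂) :
    ∃ a₂ ∈ parabolic cs J, x₂ = w' * a₂ := by
  obtain ⟨ω', hω'red, hω'prodeq⟩ := cs.exists_reduced_word' w'
  have hω'prod : cs.wordProd ω' = w' := hω'prodeq.symm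
  obtain ⟨α, hαJ, hαred, hαprod⟩ := exists_reduced_J_word cs J ha
  have hword : cs.IsReduced (ω' ++ α) :=
    isReduced_minRep_append cs J hw' hω'red hω'prod hαJ hαred
  have hprod : cs.wordProd (ω' ++ α) = w' * a := by
    rw [cs.wordProd_append, hω'prod, hαprod]
  obtain ⟨hrefl, hlen, hltm⟩ := cov_struct cs hcov
  obtain ⟨m, hm, hmp⟩ := strong_exchange cs hrefl hltm (ω' ++ α) hprod
  rw [mul_inv_cancel_left] at hmp
  rcases lt_or_ge m ω'.length with hc | hc
  · exfalso
    rw [List.eraseIdx_append_of_lt_length hc] at hmp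
    have hx₂len : cs.length x₂ = ω'.length + α.length - 1 := by
      have h1 : cs.length (w' * a) = ω'.length + α.length := by
        rw [← hprod, hword]
        exact List.length_append
      omega
    have hredL : cs.IsReduced (ω'.eraseIdx m ++ α) := by
      unfold CoxeterSystem.IsReduced
      rw [hmp, List.length_append, hx₂len]
      have h6 := List.length_eraseIdx_add_one hc
      have h7 : cs.length (cs.wordProd α) = α.length := hαred
      have h8 := cs.length_wordProd_le ω'
      omega
    obtain ⟨σ, hσsub, hσred, hσprod⟩ := chainLE_subword cs hch _ hredL hmp
    obtain ⟨σ₁, σ₂, rfl, hs1, hs2⟩ := List.sublist_append_iff.mp hσsub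
    have hb : cs.wordProd σ₂ ∈ parabolic cs J :=
      wordProd_mem_parabolic cs J (fun i hi => hαJ i (hs2.subset hi))
    have hkey : w' * (cs.wordProd σ₂)⁻¹ = cs.wordProd σ₁ := by
      rw [← hσprod, cs.wordProd_append, mul_inv_cancel_right]
    have h1 := hw' _ (inv_mem hb)
    rw [hkey] at h1
    have h2 := cs.length_wordProd_le σ₁
    have h3 := hs1.length_le
    have h4 := List.length_eraseIdx_add_one hc
    have h5 : cs.length w' = ω'.length := by rw [← hω'prod]; exact hω'red
    omega
  · rw [List.eraseIdx_append_of_length_le hc] at hmp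
    refine ⟨cs.wordProd (α.eraseIdx (m - ω'.length)),
      wordProd_mem_parabolic cs J
        (fun i hi => hαJ i ((List.eraseIdx_sublist α _).subset hi)), ?_⟩
    rw [← hmp, cs.wordProd_append, hω'prod]

/-- Main workhorse: along a descending covering chain from `w'·a` down to `w'`,
every label is a reflection lying in `W_J`. -/
theorem main_labels : ∀ (l : List W) (a : W), a ∈ parabolic cs J →
    ∀ {w' : W}, w' ∈ minReps cs J →
    (w' * a :: l).Chain' (fun p q => bruhatCov cs q p) →
    (w' * a :: l).getLast? = some w' →
    ∀ μ ∈ chainLabels (w' * a :: l), cs.IsReflection μ ∧ μ ∈ parabolic cs J := by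
  intro l
  induction l with
  | nil =>
    intro a _ w' _ _ _ μ hμ
    simp [chainLabels] at hμ
  | cons x₂ l₂ ih =>
    intro a ha w' hw' hch hlast μ hμ
    have hcov : bruhatCov cs x₂ (w' * a) := (List.isChain_cons_cons.mp hch).1
    have hch₂ : (x₂ :: l₂).Chain' (fun p q => bruhatCov cs q p) := (List.isChain_cons_cons.mp hch).2
    have hlast₂ : (x₂ :: l₂).getLast? = some w' := by
      rwa [List.getLast?_cons_cons] at hlast
    have hchainLE : chainLE cs w' x₂ := chain_chainLE cs _ hch₂ hlast₂ (by simp)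
    obtain ⟨a₂, ha₂, rfl⟩ := coset_step cs J hw' ha hcov hchainLE
    have hlab : chainLabels (w' * a :: w' * a₂ :: l₂)
        = ((w' * a)⁻¹ * (w' * a₂)) :: chainLabels (w' * a₂ :: l₂) := by
      simp [chainLabels]
    rw [hlab] at hμ
    rcases List.mem_cons.mp hμ with rfl | hμ₂
    · refine ⟨(cov_struct cs hcov).1, ?_⟩
      have he : (w' * a)⁻¹ * (w' * a₂) = a⁻¹ * a₂ := by group
      rw [he]
      exact mul_mem (inv_mem ha) ha₂
    · exact ih a₂ ha₂ hw' hch₂ hlast₂ μ hμ₂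

end Parabolic


/-- Let w, w' ∈ W^J, v ∈ W_J with w'v ⋖ w, and let λ = w⁻¹w'v be the label of
this covering. Then for every descending maximal chain in Bruhat order from w to w' passing
through w'v, all labels occurring after the initial label λ are strictly greater than λ in
the reflection order. -/
theorem labels_after_initial_are_greater
    (cs : CoxeterSystem M W) (J : Set B)
    (rle : W → W → Prop) (hro : IsReflectionOrder cs rle) (hlast : WJLast cs J rle)
    (w w' : W) (hw : w ∈ minReps cs J) (hw' : w' ∈ minReps cs J)
    (v : W) (hv : v ∈ parabolic cs J) (hcov : bruhatCov cs (w' * v) w) :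
    ∀ c : List W, bruhatChain cs w w' c → (w' * v) ∈ c →
      ∀ μ ∈ (chainLabels c).tail, rle (w⁻¹ * (w' * v)) μ ∧ w⁻¹ * (w' * v) ≠ μ := by
  intro c hc hmemc μ hμ
  obtain ⟨hch, hhead, hlst⟩ := hc
  obtain ⟨hlamrefl, hlamlen, -⟩ := cov_struct cs hcov
  have hlamnot : w⁻¹ * (w' * v) ∉ parabolic cs J := by
    intro hmemp
    have h1 := hw _ hmemp
    rw [mul_inv_cancel_left] at h1
    omega
  cases c with
  | nil => simp at hhead
  | cons x₀ c₁ =>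
    have hx0 : x₀ = w := by simpa using hhead
    rw [hx0] at hch hmemc hμ
    cases c₁ with
    | nil => simp [chainLabels] at hμ
    | cons x₁ rest =>
      have hcov₁ : bruhatCov cs x₁ w := (List.isChain_cons_cons.mp hch).1
      have hch₁ : (x₁ :: rest).Chain' (fun p q => bruhatCov cs q p) :=
        (List.isChain_cons_cons.mp hch).2
      have hlen₁ : cs.length w = cs.length x₁ + 1 := (cov_struct cs hcov₁).2.1
      have hx₁ : x₁ = w' * v := by
        rcases List.mem_cons.mp hmemc with h | h
        · exfalso; rw [← h] at hlamlen; omega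
        rcases List.mem_cons.mp h with h | h
        · exact h.symm
        · exfalso
          have := chain_length_lt cs rest x₁ hch₁ _ h
          omega
      subst hx₁
      have htail : (chainLabels (w :: (w' * v) :: rest)).tail
          = chainLabels ((w' * v) :: rest) := by
        simp [chainLabels]
      rw [htail] at hμ
      have hlast' : ((w' * v) :: rest).getLast? = some w' := by
        rwa [List.getLast?_cons_cons] at hlst
      have hres := main_labels cs J rest v hv hw' hch₁ hlast' μ hμ
      exact hlast _ _ hlamrefl hres.1 hlamnot hres.2

end TNNFlag
end

section
/- Let w′, w ∈ W^J with w′ < w in Bruhat order, and fix v ∈ W_J. Then wv covers at most one element of the coset w′W_J in Bruhat order; that is, there is at most one u ∈ W_J with w′u ⋖ wv. -/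
namespace TNNFlag

open Classical

variable {B : Type*} {W : Type*} [Group W] {M : CoxeterMatrix B}

variable {B : Type*} {W : Type*} [Group W] {M : CoxeterMatrix B}

open List Classical

namespace SX

lemma conj_key {G : Type*} [Group G] (a b : G) (ha : a * a = 1) (hb : b * b = 1) (k : ℕ) :
    (a * b)⁻¹ * ((b * a) ^ k * b) * (a * b) = (b * a) ^ (k + 2) * b := by
  have hr : (a * b)⁻¹ = b * a := by
    rw [mul_inv_rev, inv_eq_of_mul_eq_one_left ha, inv_eq_of_mul_eq_one_left hb]
  rw [hr, ← mul_assoc (b * a) ((b * a) ^ k) b, ← pow_succ' (b * a) k,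
    mul_assoc ((b * a) ^ (k + 1)) b (a * b), ← mul_assoc b a b,
    ← mul_assoc ((b * a) ^ (k + 1)) (b * a) b, ← pow_succ (b * a) (k + 1)]

/-- Sign-flipping conjugation function on `W × ℤˣ`. -/
noncomputable def flipFun (cs : CoxeterSystem M W) (i : B) : W × ℤˣ → W × ℤˣ :=
  fun x => (cs.simple i * x.1 * cs.simple i, if x.1 = cs.simple i then -x.2 else x.2)

lemma simple_conj_cancel (cs : CoxeterSystem M W) (i : B) (x : W) :
    cs.simple i * (cs.simple i * x * cs.simple i) * cs.simple i = x := by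
  rw [← mul_assoc, ← mul_assoc, cs.simple_mul_simple_self, one_mul, mul_assoc,
    cs.simple_mul_simple_self, mul_one]

lemma flip_invol (cs : CoxeterSystem M W) (i : B) : Function.Involutive (flipFun cs i) := by
  rintro ⟨t, ε⟩
  simp only [flipFun]
  by_cases h : t = cs.simple i
  · subst h
    simp [cs.simple_mul_simple_self]
  · have h2 : cs.simple i * t * cs.simple i ≠ cs.simple i := by
      intro hh
      apply h
      have := congrArg (fun z => cs.simple i * z * cs.simple i) hh
      rw [simple_conj_cancel] at this
      rw [this, mul_assoc, cs.simple_mul_simple_self, mul_one]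
    rw [if_neg h, if_neg h2]
    simp only [Prod.mk.injEq]
    refine ⟨simple_conj_cancel cs i t, ?_⟩
    trivial

/-- The involutive permutation of `W × ℤˣ` associated to a simple reflection. -/
noncomputable def flip (cs : CoxeterSystem M W) (i : B) : Equiv.Perm (W × ℤˣ) :=
  (flip_invol cs i).toPerm

lemma flip_apply (cs : CoxeterSystem M W) (i : B) (t : W) (ε : ℤˣ) :
    flip cs i (t, ε) = (cs.simple i * t * cs.simple i, if t = cs.simple i then -ε else ε) := rfl

lemma sign_aux (c0 c1 : Prop) [Decidable c0] [Decidable c1] (ε : ℤˣ) :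
    (if c1 then -(if c0 then -ε else ε) else (if c0 then -ε else ε)) =
      ε * ((if c0 then (-1 : ℤˣ) else 1) * (if c1 then (-1 : ℤˣ) else 1)) := by
  split_ifs <;> simp

lemma flip_pow (cs : CoxeterSystem M W) (i j : B) (n : ℕ) (t : W) (ε : ℤˣ) :
    ((flip cs i * flip cs j) ^ n) (t, ε) =
      ((cs.simple i * cs.simple j) ^ n * t * ((cs.simple i * cs.simple j) ^ n)⁻¹,
        ε * ∏ k ∈ Finset.range (2 * n),
          (if t = (cs.simple j * cs.simple i) ^ k * cs.simple j then (-1 : ℤˣ) else 1)) := by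
  induction n generalizing t ε with
  | zero => simp
  | succ n ih =>
    have expand : ∀ x : W, cs.simple i * (cs.simple j * x * cs.simple j) * cs.simple i
        = (cs.simple i * cs.simple j) * x * (cs.simple i * cs.simple j)⁻¹ := by
      intro x
      rw [mul_inv_rev, cs.inv_simple, cs.inv_simple]
      group
    have hc0 : (t = cs.simple j) ↔
        (t = (cs.simple j * cs.simple i) ^ 0 * cs.simple j) := by rw [pow_zero, one_mul]
    have hc1 : (cs.simple j * t * cs.simple j = cs.simple i) ↔
        (t = (cs.simple j * cs.simple i) ^ 1 * cs.simple j) := by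
      rw [pow_one]
      constructor
      · intro hh
        have := congrArg (fun z => cs.simple j * z * cs.simple j) hh
        rw [simple_conj_cancel] at this
        exact this
      · intro hh
        subst hh
        exact simple_conj_cancel cs j (cs.simple i)
    have hA : ∀ k : ℕ,
        ((cs.simple i * cs.simple j) * t * (cs.simple i * cs.simple j)⁻¹ =
          (cs.simple j * cs.simple i) ^ k * cs.simple j) ↔
        (t = (cs.simple j * cs.simple i) ^ (k + 2) * cs.simple j) := by
      intro k
      constructor
      · intro hh
        have h4 : t = (cs.simple i * cs.simple j)⁻¹ *
            ((cs.simple i * cs.simple j) * t * (cs.simple i * cs.simple j)⁻¹) *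
            (cs.simple i * cs.simple j) := by group
        rw [h4, hh, conj_key (cs.simple i) (cs.simple j)
          (cs.simple_mul_simple_self i) (cs.simple_mul_simple_self j) k]
      · intro hh
        rw [hh, ← conj_key (cs.simple i) (cs.simple j)
          (cs.simple_mul_simple_self i) (cs.simple_mul_simple_self j) k]
        group
    rw [pow_succ, Equiv.Perm.mul_apply, Equiv.Perm.mul_apply, flip_apply, flip_apply, ih]
    simp only [Prod.mk.injEq]
    constructor
    · rw [expand t]
      generalize (cs.simple i * cs.simple j : W) = p
      group
    · rw [expand t]
      have hmain : (∏ k ∈ Finset.range (2 * n),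
          (if (cs.simple i * cs.simple j) * t * (cs.simple i * cs.simple j)⁻¹ =
            (cs.simple j * cs.simple i) ^ k * cs.simple j then (-1 : ℤˣ) else 1)) =
          ∏ k ∈ Finset.range (2 * n),
            (if t = (cs.simple j * cs.simple i) ^ (k + 2) * cs.simple j then (-1 : ℤˣ) else 1) :=
        Finset.prod_congr rfl (fun k _ => if_congr (hA k) rfl rfl)
      rw [hmain, sign_aux, if_congr hc0 rfl rfl, if_congr hc1 rfl rfl]
      have h2n2 : 2 * (n + 1) = (2 * n + 1) + 1 := by ring
      rw [h2n2, Finset.prod_range_succ', Finset.prod_range_succ']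
      simp only [zero_add]
      have hre : ∀ k : ℕ, k + 1 + 1 = k + 2 := fun k => by ring
      simp only [hre]
      simp only [mul_comm, mul_left_comm, mul_assoc]

lemma liftable (cs : CoxeterSystem M W) : M.IsLiftable (fun i => flip cs i) := by
  intro i j
  apply Equiv.ext
  rintro ⟨t, ε⟩
  show ((flip cs i * flip cs j) ^ M i j) (t, ε) = (t, ε)
  rw [flip_pow, cs.simple_mul_simple_pow i j]
  have hr : ((cs.simple j * cs.simple i) ^ (M i j) : W) = 1 := by
    rw [M.symmetric i j]
    exact cs.simple_mul_simple_pow j i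
  have h2 : (2 : ℕ) * M i j = M i j + M i j := by ring
  rw [h2, Finset.prod_range_add]
  have heq : ∀ k ∈ Finset.range (M i j),
      (if t = (cs.simple j * cs.simple i) ^ (M i j + k) * cs.simple j then (-1 : ℤˣ) else 1) =
      (if t = (cs.simple j * cs.simple i) ^ k * cs.simple j then (-1 : ℤˣ) else 1) := by
    intro k _
    rw [pow_add, hr, one_mul]
  rw [Finset.prod_congr rfl heq, Int.units_mul_self, mul_one]
  simp only [Prod.mk.injEq]
  refine ⟨by group, trivial⟩

/-- The permutation representation of `W` on `W × ℤˣ`. -/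
noncomputable def rho (cs : CoxeterSystem M W) : W →* Equiv.Perm (W × ℤˣ) :=
  cs.lift ⟨fun i => flip cs i, liftable cs⟩

lemma rho_simple (cs : CoxeterSystem M W) (i : B) : rho cs (cs.simple i) = flip cs i :=
  cs.lift_apply_simple (liftable cs) i

/-- The sign of `t` with respect to a list of group elements. -/
noncomputable def signOf (t : W) (l : List W) : ℤˣ :=
  (l.map (fun u => if t = u then (-1 : ℤˣ) else 1)).prod

lemma signOf_nil (t : W) : signOf t ([] : List W) = 1 := rfl

lemma signOf_cons (t a : W) (l : List W) :
    signOf t (a :: l) = (if t = a then (-1 : ℤˣ) else 1) * signOf t l := by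
  simp [signOf]

lemma signOf_of_not_mem {t : W} {l : List W} (h : t ∉ l) : signOf t l = 1 := by
  induction l with
  | nil => rfl
  | cons a l ih =>
    rw [signOf_cons, if_neg (fun hh => h (by rw [hh]; exact List.mem_cons_self)),
      ih (fun hh => h (List.mem_cons_of_mem a hh)), one_mul]

lemma signOf_of_nodup_mem {t : W} {l : List W} (hn : l.Nodup) (h : t ∈ l) :
    signOf t l = -1 := by
  induction l with
  | nil => exact absurd h List.not_mem_nil
  | cons a l ih =>
    rw [signOf_cons]
    rcases List.mem_cons.mp h with rfl | hmem
    · rw [if_pos rfl, signOf_of_not_mem (List.nodup_cons.mp hn).1, mul_one]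
    · have hne : t ≠ a := by
        rintro rfl
        exact (List.nodup_cons.mp hn).1 hmem
      rw [if_neg hne, ih (List.nodup_cons.mp hn).2 hmem, one_mul]

lemma mem_of_signOf_ne_one {t : W} {l : List W} (h : signOf t l ≠ 1) : t ∈ l := by
  by_contra hc
  exact h (signOf_of_not_mem hc)

lemma ris_cons (cs : CoxeterSystem M W) (i : B) (ω : List B) :
    cs.rightInvSeq (i :: ω) =
      (cs.wordProd ω)⁻¹ * cs.simple i * cs.wordProd ω :: cs.rightInvSeq ω := rfl

lemma rho_wordProd (cs : CoxeterSystem M W) (ω : List B) (t : W) (ε : ℤˣ) :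
    rho cs (cs.wordProd ω) (t, ε) =
      (cs.wordProd ω * t * (cs.wordProd ω)⁻¹, ε * signOf t (cs.rightInvSeq ω)) := by
  induction ω generalizing t ε with
  | nil => simp [signOf_nil]
  | cons i ω ih =>
    rw [cs.wordProd_cons, map_mul, Equiv.Perm.mul_apply, ih, rho_simple, flip_apply, ris_cons,
      signOf_cons]
    simp only [Prod.mk.injEq]
    have hcond : (cs.wordProd ω * t * (cs.wordProd ω)⁻¹ = cs.simple i) ↔
        (t = (cs.wordProd ω)⁻¹ * cs.simple i * cs.wordProd ω) := by
      constructor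
      · intro hh
        rw [← hh]
        group
      · intro hh
        rw [hh]
        group
    constructor
    · rw [mul_inv_rev, cs.inv_simple]
      group
    · rw [if_congr hcond rfl rfl]
      split_ifs <;> simp [mul_comm, mul_left_comm, mul_assoc]

/-- The reflection cocycle sign. -/
noncomputable def eta (cs : CoxeterSystem M W) (w t : W) : ℤˣ :=
  (rho cs w (t, 1)).2

lemma eta_eq_signOf (cs : CoxeterSystem M W) (ω : List B) (t : W) :
    eta cs (cs.wordProd ω) t = signOf t (cs.rightInvSeq ω) := by
  rw [eta, rho_wordProd, one_mul]

lemma rho_apply (cs : CoxeterSystem M W) (w t : W) (ε : ℤˣ) :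
    rho cs w (t, ε) = (w * t * w⁻¹, ε * eta cs w t) := by
  obtain ⟨ω, rfl⟩ := cs.wordProd_surjective w
  rw [rho_wordProd, eta_eq_signOf]

lemma eta_mul (cs : CoxeterSystem M W) (x y t : W) :
    eta cs (x * y) t = eta cs y t * eta cs x (y * t * y⁻¹) := by
  have h1 : rho cs (x * y) (t, 1) = rho cs x (rho cs y (t, 1)) := by
    rw [map_mul, Equiv.Perm.mul_apply]
  rw [rho_apply, rho_apply, rho_apply] at h1
  have := congrArg Prod.snd h1
  simpa using this

lemma eta_one (cs : CoxeterSystem M W) (t : W) : eta cs 1 t = 1 := by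
  rw [eta, map_one]
  rfl

lemma eta_reflection_self (cs : CoxeterSystem M W) {t : W} (ht : cs.IsReflection t) :
    eta cs t t = -1 := by
  obtain ⟨c, i, rfl⟩ := ht
  have e1 := eta_mul cs (c * cs.simple i) c⁻¹ (c * cs.simple i * c⁻¹)
  have hc1 : c⁻¹ * (c * cs.simple i * c⁻¹) * c⁻¹⁻¹ = cs.simple i := by group
  rw [hc1] at e1
  have e2 := eta_mul cs c (cs.simple i) (cs.simple i)
  have hc2 : cs.simple i * cs.simple i * (cs.simple i)⁻¹ = cs.simple i := by
    rw [cs.simple_mul_simple_self, one_mul, cs.inv_simple]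
  rw [hc2] at e2
  have hsimple : eta cs (cs.simple i) (cs.simple i) = -1 := by
    rw [eta, rho_simple, flip_apply, if_pos rfl]
  have e3 := eta_mul cs c⁻¹ c (cs.simple i)
  rw [inv_mul_cancel, eta_one] at e3
  have key : eta cs c⁻¹ (c * cs.simple i * c⁻¹) * eta cs c (cs.simple i) = 1 := by
    rw [mul_comm]
    exact e3.symm
  rw [e1, e2, hsimple]
  calc eta cs c⁻¹ (c * cs.simple i * c⁻¹) * (-1 * eta cs c (cs.simple i))
      = -(eta cs c⁻¹ (c * cs.simple i * c⁻¹) * eta cs c (cs.simple i)) := by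
        rw [neg_one_mul, mul_neg]
    _ = -1 := by rw [key]

/-- THE STRONG EXCHANGE PROPERTY. -/
theorem strong_exchange (cs : CoxeterSystem M W) {ω : List B} (hω : cs.IsReduced ω) {t : W}
    (ht : cs.IsReflection t) (hl : cs.length (cs.wordProd ω * t) < cs.length (cs.wordProd ω)) :
    t ∈ cs.rightInvSeq ω := by
  set w := cs.wordProd ω with hw
  obtain ⟨χ, hχred, hχ⟩ := cs.exists_reduced_word' (w * t)
  have h1 : t ∉ cs.rightInvSeq χ := by
    intro hmem
    have h2 := cs.isRightInversion_of_mem_rightInvSeq hχred hmem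
    rw [← hχ] at h2
    have h3 : w * t * t = w := by rw [mul_assoc, ht.mul_self, mul_one]
    have h4 := h2.2
    rw [h3] at h4
    omega
  have h2 : eta cs (w * t) t = 1 := by rw [hχ, eta_eq_signOf, signOf_of_not_mem h1]
  have h3 : eta cs w t = -1 := by
    have h4 := eta_mul cs (w * t) t t
    have h5 : (w * t) * t = w := by rw [mul_assoc, ht.mul_self, mul_one]
    have h6 : t * t * t⁻¹ = t := by rw [ht.mul_self, one_mul, ht.inv]
    rw [h5, h6, eta_reflection_self cs ht, h2] at h4
    rw [h4]
    simp
  have h4 : signOf t (cs.rightInvSeq ω) = -1 := by rw [← eta_eq_signOf, ← hw, h3]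
  exact mem_of_signOf_ne_one (by rw [h4]; decide)

theorem strong_exchange' (cs : CoxeterSystem M W) {ω : List B} (hω : cs.IsReduced ω) {t : W}
    (ht : cs.IsReflection t) (hl : cs.length (cs.wordProd ω * t) < cs.length (cs.wordProd ω)) :
    ∃ j, j < ω.length ∧ cs.wordProd (ω.eraseIdx j) = cs.wordProd ω * t := by
  have hmem := strong_exchange cs hω ht hl
  obtain ⟨j, hj, hget⟩ := List.mem_iff_getElem.mp hmem
  rw [cs.length_rightInvSeq] at hj
  refine ⟨j, hj, ?_⟩
  rw [← cs.wordProd_mul_getD_rightInvSeq]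
  congr 1
  rw [List.getD_eq_getElem _ _ (by rw [cs.length_rightInvSeq]; exact hj), hget]

/-! ### List and inversion-sequence auxiliary lemmas -/

lemma sublist_eraseIdx {α : Type*} {l' l : List α} (h : l'.Sublist l)
    (hlen : l'.length + 1 = l.length) : ∃ k, k < l.length ∧ l' = l.eraseIdx k := by
  induction h with
  | slnil => simp at hlen
  | @cons l₁ l₂ a h ih =>
    have hl : l₁.length = l₂.length := by
      simp only [List.length_cons] at hlen
      omega
    refine ⟨0, by simp, ?_⟩
    rw [List.eraseIdx_cons_zero]
    exact h.eq_of_length hl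
  | @cons_cons l₁ l₂ a h ih =>
    have hl : l₁.length + 1 = l₂.length := by
      simp only [List.length_cons] at hlen
      omega
    obtain ⟨k, hk, hek⟩ := ih hl
    exact ⟨k + 1, by simp; omega, by rw [List.eraseIdx_cons_succ, ← hek]⟩

lemma getD_rightInvSeq_eraseIdx (cs : CoxeterSystem M W) (ω : List B) {j j' : ℕ}
    (hjj : j < j') (hj' : j' < ω.length) :
    (cs.rightInvSeq (ω.eraseIdx j)).getD (j' - 1) 1 = (cs.rightInvSeq ω).getD j' 1 := by
  rw [cs.getD_rightInvSeq, cs.getD_rightInvSeq,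
    (Nat.sub_add_cancel (by omega) : j' - 1 + 1 = j'), List.eraseIdx_eq_take_drop_succ,
    List.drop_append, List.drop_of_length_le (by simp [hjj.le]), List.length_take,
    List.drop_drop, List.nil_append, min_eq_left_of_lt (hjj.trans hj'),
    (by omega : j + 1 + (j' - j) = j' + 1), mul_left_inj, mul_right_inj]
  congr 2
  show (List.take j ω ++ List.drop (j + 1) ω)[j' - 1]? = ω[j']?
  rw [List.getElem?_append_right (by simp [Nat.le_sub_one_of_lt hjj]), List.getElem?_drop]
  congr
  show j + 1 + (j' - 1 - List.length (List.take j ω)) = j'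
  rw [List.length_take]
  omega

/-- Any word contains a reduced sublist with the same product. -/
theorem exists_reduced_sublist (cs : CoxeterSystem M W) (ω : List B) :
    ∃ χ : List B, χ.Sublist ω ∧ cs.IsReduced χ ∧ cs.wordProd χ = cs.wordProd ω := by
  induction ω using List.reverseRecOn with
  | nil => exact ⟨[], by simp, by simp [CoxeterSystem.IsReduced], rfl⟩
  | append_singleton ω₀ i ih =>
    obtain ⟨χ, hsub, hred, hprod⟩ := ih
    by_cases hri : cs.IsReduced (χ ++ [i])
    · refine ⟨χ ++ [i], ?_, hri, ?_⟩
      · exact List.Sublist.append hsub (List.Sublist.refl [i])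
      · rw [cs.wordProd_append, cs.wordProd_append, hprod]
    · have hπ : cs.wordProd (χ ++ [i]) = cs.wordProd χ * cs.simple i := by
        rw [cs.wordProd_append, cs.wordProd_singleton]
      rcases cs.length_mul_simple (cs.wordProd χ) i with hup | hdown
      · exfalso
        apply hri
        rw [CoxeterSystem.IsReduced, hπ, hup, hred]
        simp
      · have hlt : cs.length (cs.wordProd χ * cs.simple i) < cs.length (cs.wordProd χ) := by
          omega
        obtain ⟨j, hj, hje⟩ := strong_exchange' cs hred (cs.isReflection_simple i) hlt
        refine ⟨χ.eraseIdx j, ?_, ?_, ?_⟩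
        · exact ((List.eraseIdx_sublist χ j).trans hsub).trans (List.sublist_append_left ω₀ [i])
        · rw [CoxeterSystem.IsReduced, hje, List.length_eraseIdx_of_lt hj]
          rw [CoxeterSystem.IsReduced] at hred
          omega
        · rw [hje, cs.wordProd_append, cs.wordProd_singleton, hprod]

/-! ### Parabolic subgroup lemmas -/

lemma mem_parabolic_of_word (cs : CoxeterSystem M W) (J : Set B) {ω : List B}
    (hJ : ∀ b ∈ ω, b ∈ J) : cs.wordProd ω ∈ parabolic cs J := by
  induction ω with
  | nil => simpa [cs.wordProd_nil] using one_mem _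
  | cons a ω ih =>
    rw [cs.wordProd_cons]
    refine mul_mem (Subgroup.subset_closure ?_) (ih (fun b hb => hJ b (List.mem_cons_of_mem a hb)))
    exact ⟨a, hJ a List.mem_cons_self, rfl⟩

lemma exists_word_of_mem_parabolic (cs : CoxeterSystem M W) (J : Set B) {p : W}
    (hp : p ∈ parabolic cs J) : ∃ ω : List B, (∀ b ∈ ω, b ∈ J) ∧ cs.wordProd ω = p := by
  induction hp using Subgroup.closure_induction with
  | mem x hx =>
    obtain ⟨j, hj, rfl⟩ := hx
    exact ⟨[j], by simpa using hj, by simp⟩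
  | one => exact ⟨[], by simp, by simp⟩
  | mul x y _ _ ihx ihy =>
    obtain ⟨ω₁, h₁, hp₁⟩ := ihx
    obtain ⟨ω₂, h₂, hp₂⟩ := ihy
    refine ⟨ω₁ ++ ω₂, ?_, by rw [cs.wordProd_append, hp₁, hp₂]⟩
    intro b hb
    rcases List.mem_append.mp hb with h | h
    · exact h₁ b h
    · exact h₂ b h
  | inv x _ ihx =>
    obtain ⟨ω₁, h₁, hp₁⟩ := ihx
    refine ⟨ω₁.reverse, fun b hb => h₁ b (List.mem_reverse.mp hb), ?_⟩
    rw [cs.wordProd_reverse, hp₁]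

lemma exists_reduced_word_of_mem_parabolic (cs : CoxeterSystem M W) (J : Set B) {p : W}
    (hp : p ∈ parabolic cs J) :
    ∃ ω : List B, (∀ b ∈ ω, b ∈ J) ∧ cs.IsReduced ω ∧ cs.wordProd ω = p := by
  obtain ⟨ω, hJ, hπ⟩ := exists_word_of_mem_parabolic cs J hp
  obtain ⟨χ, hsub, hred, hprod⟩ := exists_reduced_sublist cs ω
  exact ⟨χ, fun b hb => hJ b (hsub.subset hb), hred, by rw [hprod, hπ]⟩

/-- Length additivity for minimal coset representatives, word version. -/
theorem length_minRep_mul_word (cs : CoxeterSystem M W) (J : Set B) {w : W}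
    (hw : w ∈ minReps cs J) (ω : List B) (hJ : ∀ b ∈ ω, b ∈ J) (hred : cs.IsReduced ω) :
    cs.length (w * cs.wordProd ω) = cs.length w + ω.length := by
  induction ω using List.reverseRecOn with
  | nil => simp
  | append_singleton χ i ih =>
    have hJχ : ∀ b ∈ χ, b ∈ J := fun b hb => hJ b (List.mem_append_left [i] hb)
    have hredχ : cs.IsReduced χ := by
      have := hred.take χ.length
      rwa [List.take_left] at this
    have ihχ := ih hJχ hredχ
    have hπ : cs.wordProd (χ ++ [i]) = cs.wordProd χ * cs.simple i := by
      rw [cs.wordProd_append, cs.wordProd_singleton]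
    rw [hπ, List.length_append, List.length_singleton, ← mul_assoc]
    rcases cs.length_mul_simple (w * cs.wordProd χ) i with hup | hdown
    · rw [hup, ihχ]
      omega
    · exfalso
      -- s i is a right inversion of w * π χ; apply strong exchange to the word α ++ χ
      obtain ⟨α, hαred, hαw⟩ := cs.exists_reduced_word' w
      have hacred : cs.IsReduced (α ++ χ) := by
        rw [CoxeterSystem.IsReduced, cs.wordProd_append, ← hαw, List.length_append]
        rw [ihχ]
        rw [CoxeterSystem.IsReduced] at hαred hredχ
        rw [← hαw] at hαred
        omega
      have hlt : cs.length (cs.wordProd (α ++ χ) * cs.simple i)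
          < cs.length (cs.wordProd (α ++ χ)) := by
        rw [cs.wordProd_append, ← hαw]
        omega
      obtain ⟨k, hk, hke⟩ := strong_exchange' cs hacred (cs.isReflection_simple i) hlt
      rw [List.length_append] at hk
      rcases Nat.lt_or_ge k α.length with hkα | hkα
      · -- deletion in α: contradicts minimality of w
        rw [List.eraseIdx_append_of_lt_length hkα] at hke
        have h1 : cs.wordProd (α.eraseIdx k) * cs.wordProd χ
            = w * cs.wordProd χ * cs.simple i := by
          rw [← cs.wordProd_append, hke, cs.wordProd_append, ← hαw]
        have h2 : w * (cs.wordProd χ * cs.simple i * (cs.wordProd χ)⁻¹)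
            = cs.wordProd (α.eraseIdx k) := by
          rw [← mul_assoc, ← mul_assoc, ← h1]
          group
        have hmem : cs.wordProd χ * cs.simple i * (cs.wordProd χ)⁻¹ ∈ parabolic cs J := by
          refine mul_mem (mul_mem (mem_parabolic_of_word cs J hJχ)
            (Subgroup.subset_closure ⟨i, hJ i (by simp), rfl⟩))
            (inv_mem (mem_parabolic_of_word cs J hJχ))
        have hge := hw _ hmem
        rw [h2] at hge
        have hle : cs.length (cs.wordProd (α.eraseIdx k)) ≤ α.length - 1 := by
          calc cs.length (cs.wordProd (α.eraseIdx k)) ≤ (α.eraseIdx k).length :=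
                cs.length_wordProd_le _
            _ = α.length - 1 := by rw [List.length_eraseIdx_of_lt hkα]
        rw [CoxeterSystem.IsReduced] at hαred
        rw [← hαw] at hαred
        omega
      · -- deletion in χ: contradicts reducedness of χ ++ [i]
        rw [List.eraseIdx_append_of_length_le hkα] at hke
        have h1 : cs.wordProd χ * cs.simple i = cs.wordProd (χ.eraseIdx (k - α.length)) := by
          have := hke
          rw [cs.wordProd_append, cs.wordProd_append, ← hαw, mul_assoc] at this
          exact (mul_left_cancel this).symm
        have h2 : cs.length (cs.wordProd χ * cs.simple i) ≤ χ.length - 1 := by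
          rw [h1]
          calc cs.length (cs.wordProd (χ.eraseIdx (k - α.length)))
              ≤ (χ.eraseIdx (k - α.length)).length := cs.length_wordProd_le _
            _ ≤ χ.length - 1 := by
              have h3 : k - α.length < χ.length := by omega
              rw [List.length_eraseIdx_of_lt h3]
        -- but χ ++ [i] is reduced, so ℓ(π χ * s i) = χ.length + 1
        rw [CoxeterSystem.IsReduced, hπ, List.length_append, List.length_singleton] at hred
        omega

theorem length_minRep_mul (cs : CoxeterSystem M W) (J : Set B) {w p : W}
    (hw : w ∈ minReps cs J) (hp : p ∈ parabolic cs J) :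
    cs.length (w * p) = cs.length w + cs.length p := by
  obtain ⟨ω, hJ, hred, hπ⟩ := exists_reduced_word_of_mem_parabolic cs J hp
  have := length_minRep_mul_word cs J hw ω hJ hred
  rw [hπ] at this
  rw [this, ← hred, hπ]

theorem minReps_unique (cs : CoxeterSystem M W) (J : Set B) {w w' : W}
    (hw : w ∈ minReps cs J) (hw' : w' ∈ minReps cs J) (h : w⁻¹ * w' ∈ parabolic cs J) :
    w = w' := by
  have h1 : w * (w⁻¹ * w') = w' := by group
  have h2 : w' * (w⁻¹ * w')⁻¹ = w := by group
  have e1 : cs.length w' = cs.length w + cs.length (w⁻¹ * w') := by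
    have := length_minRep_mul cs J hw h
    rw [h1] at this
    exact this
  have e2 : cs.length w = cs.length w' + cs.length (w⁻¹ * w')⁻¹ := by
    have := length_minRep_mul cs J hw' (inv_mem h)
    rw [h2] at this
    exact this
  rw [cs.length_inv] at e2
  have h0 : cs.length (w⁻¹ * w') = 0 := by omega
  have := cs.length_eq_zero_iff.mp h0
  have : w⁻¹ * w' = 1 := this
  calc w = w * (w⁻¹ * w') := by rw [this, mul_one]
    _ = w' := h1

/-- A Bruhat covering is given by right multiplication by a reflection. -/
lemma cov_reflection (cs : CoxeterSystem M W) {z x : W} (h : bruhatCov cs z x) :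
    ∃ t, cs.IsReflection t ∧ x * t = z := by
  obtain ⟨⟨⟨ω, hred, hπ, ω', hsub, hred', hπ'⟩, hne⟩, hlen⟩ := h
  have hlω : ω.length = cs.length x := by rw [← hπ]; exact hred.symm
  have hlω' : ω'.length = cs.length z := by rw [← hπ']; exact hred'.symm
  have hll : ω'.length + 1 = ω.length := by omega
  obtain ⟨k, hk, hek⟩ := sublist_eraseIdx hsub hll
  have hk' : k < (cs.rightInvSeq ω).length := by rw [cs.length_rightInvSeq]; exact hk
  refine ⟨(cs.rightInvSeq ω).getD k 1, ?_, ?_⟩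
  · apply cs.isReflection_of_mem_rightInvSeq ω
    rw [List.getD_eq_getElem _ 1 hk']
    exact List.getElem_mem _
  · rw [← hπ, cs.wordProd_mul_getD_rightInvSeq, ← hek, hπ']

/-- The core uniqueness argument: two distinct single deletions from a reduced word of a
minimal coset representative cannot land in the same left coset of the parabolic. -/
lemma core_contradiction (cs : CoxeterSystem M W) (J : Set B) {w : W}
    (hw : w ∈ minReps cs J) {α : List B} (hαred : cs.IsReduced α) (hαw : cs.wordProd α = w)
    {k₁ k₂ : ℕ} (h12 : k₁ < k₂) (hk₂ : k₂ < α.length)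
    (h1red : cs.length (cs.wordProd (α.eraseIdx k₁)) + 1 = α.length)
    (hq : (cs.wordProd (α.eraseIdx k₁))⁻¹ * cs.wordProd (α.eraseIdx k₂) ∈ parabolic cs J) :
    False := by
  have hk₁ : k₁ < α.length := h12.trans hk₂
  have ha₁ := cs.wordProd_mul_getD_rightInvSeq α k₁
  have ha₂ := cs.wordProd_mul_getD_rightInvSeq α k₂
  have hrefl₁ : cs.IsReflection ((cs.rightInvSeq α).getD k₁ 1) := by
    apply cs.isReflection_of_mem_rightInvSeq α
    rw [List.getD_eq_getElem _ 1 (by rw [cs.length_rightInvSeq]; exact hk₁)]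
    exact List.getElem_mem _
  have hqe : cs.wordProd (α.eraseIdx k₁) * ((cs.rightInvSeq α).getD k₂ 1)
      = w * ((cs.wordProd (α.eraseIdx k₁))⁻¹ * cs.wordProd (α.eraseIdx k₂)) := by
    rw [← ha₁, ← ha₂, hαw, mul_inv_rev, hrefl₁.inv]
    group
  have hge : cs.length w
      ≤ cs.length (cs.wordProd (α.eraseIdx k₁) * ((cs.rightInvSeq α).getD k₂ 1)) := by
    rw [hqe]
    exact hw _ hq
  have hred1 : cs.IsReduced (α.eraseIdx k₁) := by
    rw [CoxeterSystem.IsReduced, List.length_eraseIdx_of_lt hk₁]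
    omega
  have hmem : ((cs.rightInvSeq α).getD k₂ 1) ∈ cs.rightInvSeq (α.eraseIdx k₁) := by
    rw [← getD_rightInvSeq_eraseIdx cs α h12 hk₂]
    have hlen2 : k₂ - 1 < (cs.rightInvSeq (α.eraseIdx k₁)).length := by
      rw [cs.length_rightInvSeq, List.length_eraseIdx_of_lt hk₁]
      omega
    rw [List.getD_eq_getElem _ 1 hlen2]
    exact List.getElem_mem _
  have hinv := cs.isRightInversion_of_mem_rightInvSeq hred1 hmem
  have hlt := hinv.2
  rw [CoxeterSystem.IsReduced] at hred1
  rw [List.length_eraseIdx_of_lt hk₁] at hred1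
  have hlw : cs.length w = α.length := by rw [← hαw]; exact hαred
  omega

end SX

end TNNFlag
namespace TNNFlag

variable {B : Type*} {W : Type*} [Group W] {M : CoxeterMatrix B}

open List SX

/-- If w', w ∈ W^J with w' < w and v ∈ W_J, then wv covers at most one
element of the coset w'W_J in Bruhat order. -/
theorem at_most_one_covered_in_coset
    (cs : CoxeterSystem M W) (J : Set B) (w' w : W)
    (hw' : w' ∈ minReps cs J) (hw : w ∈ minReps cs J) (hlt : bruhatLT cs w' w)
    (v : W) (hv : v ∈ parabolic cs J) :
    ∀ u u' : W, u ∈ parabolic cs J → u' ∈ parabolic cs J →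
      bruhatCov cs (w' * u) (w * v) → bruhatCov cs (w' * u') (w * v) → u = u' := by
  intro u u' hu hu' hcov hcov'
  obtain ⟨α, hαred, hαw⟩ := cs.exists_reduced_word' w
  obtain ⟨β, hβJ, hβred, hβv⟩ := exists_reduced_word_of_mem_parabolic cs J hv
  have hlwα : cs.length w = α.length := by rw [hαw]; exact hαred
  have hlvβ : cs.length v = β.length := by rw [← hβv]; exact hβred
  have hadd : cs.length (w * v) = cs.length w + cs.length v := length_minRep_mul cs J hw hv
  have hπαβ : cs.wordProd (α ++ β) = w * v := by rw [cs.wordProd_append, ← hαw, hβv]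
  have hccred : cs.IsReduced (α ++ β) := by
    rw [CoxeterSystem.IsReduced, hπαβ, hadd, List.length_append]
    omega
  have key : ∀ u₀ : W, u₀ ∈ parabolic cs J → bruhatCov cs (w' * u₀) (w * v) →
      ∃ k, k < α.length ∧ cs.wordProd (α.eraseIdx k) * v = w' * u₀ ∧
        cs.length (cs.wordProd (α.eraseIdx k)) + 1 = α.length := by
    intro u₀ hu₀ hc
    obtain ⟨t, hrefl, hxt⟩ := cov_reflection cs hc
    have hlen0 : cs.length (w * v) = cs.length (w' * u₀) + 1 := hc.2
    have hlt0 : cs.length (cs.wordProd (α ++ β) * t) < cs.length (cs.wordProd (α ++ β)) := by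
      rw [hπαβ, hxt]
      omega
    obtain ⟨k, hk, hke⟩ := strong_exchange' cs hccred hrefl hlt0
    rw [hπαβ, hxt] at hke
    rw [List.length_append] at hk
    rcases Nat.lt_or_ge k α.length with hkα | hkα
    · rw [List.eraseIdx_append_of_lt_length hkα, cs.wordProd_append, hβv] at hke
      refine ⟨k, hkα, hke, ?_⟩
      have hb1 : cs.length (cs.wordProd (α.eraseIdx k) * v)
          ≤ cs.length (cs.wordProd (α.eraseIdx k)) + cs.length v := cs.length_mul_le _ _
      have hb2 : cs.length (cs.wordProd (α.eraseIdx k)) ≤ (α.eraseIdx k).length :=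
        cs.length_wordProd_le _
      rw [List.length_eraseIdx_of_lt hkα] at hb2
      rw [hke] at hb1
      omega
    · exfalso
      rw [List.eraseIdx_append_of_length_le hkα, cs.wordProd_append, ← hαw] at hke
      have hqmem : cs.wordProd (β.eraseIdx (k - α.length)) ∈ parabolic cs J :=
        mem_parabolic_of_word cs J
          (fun b hb => hβJ b ((List.eraseIdx_sublist β (k - α.length)).subset hb))
      have hwmem : w⁻¹ * w' ∈ parabolic cs J := by
        have h6 : w * (cs.wordProd (β.eraseIdx (k - α.length)) * u₀⁻¹) = w' := by
          rw [← mul_assoc, hke]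
          group
        have h5 : w⁻¹ * w' = cs.wordProd (β.eraseIdx (k - α.length)) * u₀⁻¹ := by
          rw [← h6]
          group
        rw [h5]
        exact mul_mem hqmem (inv_mem hu₀)
      exact hlt.2 (minReps_unique cs J hw hw' hwmem).symm
  obtain ⟨k₁, hk₁, he₁, hl₁⟩ := key u hu hcov
  obtain ⟨k₂, hk₂, he₂, hl₂⟩ := key u' hu' hcov'
  by_contra hne
  have hkne : k₁ ≠ k₂ := by
    rintro rfl
    exact hne (mul_left_cancel (he₁.symm.trans he₂))
  have hq12 : (cs.wordProd (α.eraseIdx k₁))⁻¹ * cs.wordProd (α.eraseIdx k₂)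
      = v * (u⁻¹ * u') * v⁻¹ := by
    have e1 : cs.wordProd (α.eraseIdx k₁) = w' * u * v⁻¹ := by rw [← he₁]; group
    have e2 : cs.wordProd (α.eraseIdx k₂) = w' * u' * v⁻¹ := by rw [← he₂]; group
    rw [e1, e2]
    group
  have hqmem12 : (cs.wordProd (α.eraseIdx k₁))⁻¹ * cs.wordProd (α.eraseIdx k₂)
      ∈ parabolic cs J := by
    rw [hq12]
    exact mul_mem (mul_mem hv (mul_mem (inv_mem hu) hu')) (inv_mem hv)
  rcases hkne.lt_or_gt with h12 | h21
  · exact core_contradiction cs J hw hαred hαw.symm h12 hk₂ hl₁ hqmem12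
  · have hqmem21 : (cs.wordProd (α.eraseIdx k₂))⁻¹ * cs.wordProd (α.eraseIdx k₁)
        ∈ parabolic cs J := by
      have : (cs.wordProd (α.eraseIdx k₂))⁻¹ * cs.wordProd (α.eraseIdx k₁)
          = ((cs.wordProd (α.eraseIdx k₁))⁻¹ * cs.wordProd (α.eraseIdx k₂))⁻¹ := by group
      rw [this]
      exact inv_mem hqmem12
    exact core_contradiction cs J hw hαred hαw.symm h21 hk₁ hl₂ hqmem21


end TNNFlag
end
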